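/- The fixed point ξ_Mu of the substitution a→aca, c→d, d→c is not eventually periodic. -/

import Mathlib

/-!
The letter of `ξ` at `n` depends only on the `2`-adic valuation of `n`, and it changes
whenever the valuation goes up by one. If `ξ` were eventually periodic with period
`p = 2^j q`, `q` odd, take `m = q + 4N`: then `2^j m` and `2^j m + p = 2^(j+1) (q + 2N)` are
positions beyond `N` of valuations `j` and `j + 1`, so they carry different letters.
-/

inductive ACD : Type
  | a | c | d
deriving DecidableEq

open Filter

namespace ACD

def ofValuation (k : ℕ) : ACD :=
  if k = 0 then a else if Odd k then c else d

theorem ofValuation_succ_ne (k : ℕ) : ofValuation (k + 1) ≠ ofValuation k := by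
  rcases Nat.even_or_odd k with hk | hk
  · rcases k.eq_zero_or_pos with rfl | hk0
    · simp [ofValuation]
    · simp [ofValuation, hk.add_one, Nat.not_odd_iff_even.2 hk, hk0.ne']
  · simp [ofValuation, hk, Nat.not_odd_iff_even.2 hk.add_one, hk.pos.ne']

end ACD

theorem List.eventually_periodic_of_getD {α : Type*} (f : ℕ → α) (w u : List α) (x : α)
    (hf : ∀ n, f n = if n < w.length then w.getD n x
      else u.getD ((n - w.length) % u.length) x) :
    ∀ᶠ n in atTop, f (n + u.length) = f n := by
  filter_upwards [eventually_ge_atTop w.length] with n hn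
  rw [hf, hf, if_neg (by omega), if_neg (by omega), Nat.sub_add_comm hn, Nat.add_mod_right]

theorem frequently_ne_add_of_valuation (ξ : ℕ → ACD)
    (h : ∀ k m : ℕ, Odd m → ξ (2 ^ k * m) = ACD.ofValuation k) {p : ℕ} (hp : 0 < p) :
    ∃ᶠ n in atTop, ξ (n + p) ≠ ξ n := by
  obtain ⟨j, q, hq, rfl⟩ := Nat.exists_eq_two_pow_mul_odd hp.ne'
  refine frequently_atTop.2 fun N ↦ ⟨2 ^ j * (q + 4 * N), ?_, ?_⟩
  · calc N ≤ q + 4 * N := by omega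
      _ ≤ 2 ^ j * (q + 4 * N) := Nat.le_mul_of_pos_left _ (by positivity)
  · have hsum : 2 ^ j * (q + 4 * N) + 2 ^ j * q = 2 ^ (j + 1) * (q + 2 * N) := by ring
    rw [hsum, h _ _ (hq.add_even (even_two_mul N)), h _ _ (hq.add_even ⟨2 * N, by ring⟩)]
    exact ACD.ofValuation_succ_ne j

/-- The fixed point `ξ` of the substitution `a → aca`, `c → d`, `d → c`
beginning with `a` (indexed from 1; explicitly, if `n = 2^k * m` with `m` odd,
its `n`-th letter is `a` if `k = 0`, `c` if `k` is odd, and `d` if `k` is even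
and positive) is not eventually periodic: it is not of the form `w · u^∞` for
finite words `w, u` with `u` nonempty. -/
theorem xiMu_not_eventually_periodic
    (ξ : ℕ → ACD)
    (h : ∀ k m : ℕ, Odd m →
      ξ (2 ^ k * m) =
        if k = 0 then ACD.a else if Odd k then ACD.c else ACD.d) :
    ¬ ∃ w u : List ACD, u ≠ [] ∧ ∀ n : ℕ,
        ξ (n + 1) = if n < w.length then w.getD n ACD.a
          else u.getD ((n - w.length) % u.length) ACD.a := by
  rintro ⟨w, u, hu, hw⟩
  have hper := List.eventually_periodic_of_getD (fun n ↦ ξ (n + 1)) w u ACD.a hw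
  have hne := frequently_ne_add_of_valuation ξ h (List.length_pos_iff.2 hu)
  rw [← map_add_atTop_eq_nat 1, frequently_map] at hne
  obtain ⟨n, hne, heq⟩ := (hne.and_eventually hper).exists
  exact hne (by rwa [add_right_comm])
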